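/- The function H_1(y) = (y/2 + 1) · ln(1 + (1/y)·(1 + √(2(1+y)/(y−2)))) is strictly decreasing on [3, ∞); that is, for all real numbers y1, y2 with 3 ≤ y1 < y2, H_1(y2) < H_1(y1). -/

import Mathlib

/-- `H₁(y) = (y/2 + 1) · ln(1 + (1/y)(1 + √(2(1+y)/(y−2))))`. -/
noncomputable def H1 (y : ℝ) : ℝ :=
  (y / 2 + 1) * Real.log (1 + (1 / y) * (1 + Real.sqrt (2 * (1 + y) / (y - 2))))

/-!
Write `H1 y = (y/2 + 1) · log u` with `u = 1 + (1 + t)/y` and `t = √(2(1+y)/(y-2))`. Since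
`log u < u - 1`, the derivative `(log u + (y + 2) u'/u) / 2` is negative as soon as
`(u - 1) u + (y + 2) u' ≤ 0`. Using `t² (y - 2) = 2(1 + y)`, this clears denominators to
`t (y + 4)(y - 2) < 3y(y + 2)`, which after squaring is the positivity of
`7y⁴ + 22y³ + 24y² + 64y + 64`. So `H1` is strictly decreasing on all of `(2, ∞)`.
-/

open Real Set

lemma log_add_mul_div_neg_of_sub_one_mul_add_nonpos {u u' a : ℝ} (hu : 1 < u)
    (h : (u - 1) * u + a * u' ≤ 0) : log u + a * (u' / u) < 0 := by
  have hu₀ : 0 < u := by linarith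
  have hlog : log u < u - 1 := log_lt_sub_one_of_pos hu₀ hu.ne'
  have : a * (u' / u) ≤ -(u - 1) := by
    rw [mul_div_assoc', div_le_iff₀ hu₀]
    linarith
  linarith

namespace H1

noncomputable def root (y : ℝ) : ℝ := √(2 * (1 + y) / (y - 2))

noncomputable def logArg (y : ℝ) : ℝ := 1 + (1 + root y) / y

noncomputable def logArgDeriv (y : ℝ) : ℝ :=
  (y * (-3 / ((y - 2) ^ 2 * root y)) - (1 + root y)) / y ^ 2

variable {y : ℝ}

lemma root_pos (hy : 2 < y) : 0 < root y :=
  sqrt_pos.mpr (div_pos (by linarith) (by linarith))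

lemma root_sq_mul (hy : 2 < y) : root y ^ 2 * (y - 2) = 2 * (1 + y) := by
  rw [root, sq_sqrt (div_pos (by linarith) (by linarith)).le,
    div_mul_cancel₀ _ (by linarith)]

lemma one_lt_logArg (hy : 2 < y) : 1 < logArg y := by
  have : 0 < (1 + root y) / y := div_pos (by linarith [root_pos hy]) (by linarith)
  rw [logArg]
  linarith

lemma eq_mul_log_logArg : H1 = fun y => (y / 2 + 1) * log (logArg y) := by
  ext y
  rw [H1, logArg, root, one_div_mul_eq_div]

lemma hasDerivAt_root (hy : 2 < y) : HasDerivAt root (-3 / ((y - 2) ^ 2 * root y)) y := by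
  have hquot : HasDerivAt (fun z => 2 * (1 + z) / (z - 2)) (-6 / (y - 2) ^ 2) y :=
    ((((hasDerivAt_id' y).const_add 1).const_mul 2).div
      ((hasDerivAt_id' y).sub_const 2) (by linarith)).congr_deriv (by ring)
  refine (hquot.sqrt (div_pos (by linarith) (by linarith)).ne').congr_deriv ?_
  have := root_pos hy
  rw [← root]
  field_simp
  ring

lemma hasDerivAt_logArg (hy : 2 < y) : HasDerivAt logArg (logArgDeriv y) y :=
  ((((hasDerivAt_root hy).const_add 1).div (hasDerivAt_id' y) (by linarith)).const_add 1)
    |>.congr_deriv (by rw [logArgDeriv]; ring)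

lemma root_mul_lt (hy : 2 < y) : root y * (y + 4) * (y - 2) < 3 * y * (y + 2) := by
  have hrhs : 0 ≤ 3 * y * (y + 2) := by positivity
  refine lt_of_pow_lt_pow_left₀ 2 hrhs ?_
  have hsq : (root y * (y + 4) * (y - 2)) ^ 2 = 2 * (1 + y) * (y + 4) ^ 2 * (y - 2) := by
    linear_combination (y + 4) ^ 2 * (y - 2) * root_sq_mul hy
  rw [hsq]
  nlinarith [show 0 < 7 * y ^ 4 + 22 * y ^ 3 + 24 * y ^ 2 + 64 * y + 64 by positivity]

lemma sub_one_mul_logArg_add_nonpos (hy : 2 < y) :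
    (logArg y - 1) * logArg y + (y + 2) * logArgDeriv y ≤ 0 := by
  have ht : 0 < root y := root_pos hy
  have hy₂ : 0 < y - 2 := by linarith
  have hden : 0 < y ^ 2 * (y - 2) ^ 2 * root y := by positivity
  have hclear : ((logArg y - 1) * logArg y + (y + 2) * logArgDeriv y)
      * (y ^ 2 * (y - 2) ^ 2 * root y) = root y * (y + 4) * (y - 2) - 3 * y * (y + 2) := by
    rw [logArg, logArgDeriv]
    field_simp
    linear_combination root y * (y - 2) * root_sq_mul hy
  nlinarith [root_mul_lt hy]

lemma exists_hasDerivAt_neg (hy : 2 < y) : ∃ d < 0, HasDerivAt H1 d y := by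
  have hu₁ : 1 < logArg y := one_lt_logArg hy
  refine ⟨(log (logArg y) + (y + 2) * (logArgDeriv y / logArg y)) / 2, ?_, ?_⟩
  · linarith [log_add_mul_div_neg_of_sub_one_mul_add_nonpos hu₁
      (sub_one_mul_logArg_add_nonpos hy)]
  · rw [eq_mul_log_logArg]
    exact ((((hasDerivAt_id' y).div_const 2).add_const 1).mul
      ((hasDerivAt_logArg hy).log (by linarith))).congr_deriv (by ring)

theorem strictAntiOn_Ioi_two : StrictAntiOn H1 (Ioi 2) := by
  refine strictAntiOn_of_deriv_neg (convex_Ioi 2) (fun x hx => ?_) (fun x hx => ?_)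
  · obtain ⟨_, _, hd⟩ := exists_hasDerivAt_neg hx
    exact hd.continuousAt.continuousWithinAt
  · rw [interior_Ioi] at hx
    obtain ⟨d, hd, hderiv⟩ := exists_hasDerivAt_neg hx
    rwa [hderiv.deriv]

end H1

theorem H1_strictAnti (y1 y2 : ℝ) (h1 : 3 ≤ y1) (h12 : y1 < y2) : H1 y2 < H1 y1 :=
  H1.strictAntiOn_Ioi_two (by linarith : (2 : ℝ) < y1) (by linarith : (2 : ℝ) < y2) h12
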